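/- Let (M, d) be a pseudometric space, K a positive integer, μ, η ∈ M, and μ₁,…,μ_K ∈ M. Let M̃ ⊆ M be nonempty with inf_{ν∈M̃} d(η, ν) = ε, and suppose μ₁,…,μ_K are independent random elements with P(d(μ_k, η) > t) ≤ 1/4 for all k, where K = ⌈8 log(1/δ)⌉ for some δ ∈ (0,1). Let μ̃ be a random element of M̃ that almost surely minimizes ν ↦ min_{I:|I|>K/2} max_{j∈I} d(μ_j, ν) over M̃. Then P(d(μ̃, η) > 2t + ε) ≤ δ. -/

import Mathlib

/-!
If fewer than `K/2` of the `μ_k` are farther than `t` from `η`, the remaining ones form a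
majority `I₀` within `t` of `η`. A point `ν ∈ M̃` with `d(η, ν) < ε + θ` then has objective at most
`t + ε + θ` (take `I = I₀`), while every majority meets `I₀`, so the objective at the minimiser
`w` is at least `d(w, η) - t`; hence `d(w, η) ≤ 2t + ε`. The number of far estimators is a sum of
`K` independent indicators of mean at most `1/4`, and Hoeffding's inequality bounds the
probability that it reaches `K/2` by `exp(-K/8) ≤ δ`.
-/

open Finset MeasureTheory ProbabilityTheory

/-- The GROS objective: `ν ↦ min_{I ⊆ [K], |I| > K/2} max_{j ∈ I} d(μ_j, ν)`. -/
noncomputable def grosObj {M : Type*} [PseudoMetricSpace M] (K : ℕ)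
    (μs : Fin K → M) (ν : M) : ℝ :=
  ⨅ I : {I : Finset (Fin K) // K < 2 * I.card}, ⨆ j ∈ I.1, dist (μs j) ν

theorem Finset.inter_nonempty_of_lt_two_mul_card {α : Type*} [Fintype α] [DecidableEq α]
    {I J : Finset α} (hI : Fintype.card α < 2 * #I) (hJ : Fintype.card α < 2 * #J) :
    (I ∩ J).Nonempty :=
  inter_nonempty_of_card_lt_card_add_card (subset_univ I) (subset_univ J)
    (by rw [card_univ]; omega)

section grosObj

variable {M : Type*} [PseudoMetricSpace M] {K : ℕ} {μs : Fin K → M} {ν : M} {c : ℝ}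

theorem grosObj_le_of_forall_dist_le (I : Finset (Fin K)) (hI : K < 2 * #I)
    (h : ∀ j ∈ I, dist (μs j) ν ≤ c) : grosObj K μs ν ≤ c := by
  obtain ⟨j, hj⟩ : I.Nonempty := card_pos.mp (by omega)
  have hc : 0 ≤ c := dist_nonneg.trans (h j hj)
  have hbdd : BddBelow (Set.range fun I : {I : Finset (Fin K) // K < 2 * #I} =>
      ⨆ j ∈ I.1, dist (μs j) ν) :=
    ⟨0, by rintro _ ⟨J, rfl⟩; exact Real.iSup_nonneg fun _ => Real.iSup_nonneg fun _ => dist_nonneg⟩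
  exact ciInf_le_of_le hbdd ⟨I, hI⟩ (Real.iSup_le (fun j => Real.iSup_le (h j) hc) hc)

theorem le_grosObj_of_forall_exists_le (hK : 0 < K)
    (h : ∀ I : Finset (Fin K), K < 2 * #I → ∃ j ∈ I, c ≤ dist (μs j) ν) :
    c ≤ grosObj K μs ν := by
  have : Nonempty {I : Finset (Fin K) // K < 2 * #I} := ⟨⟨univ, by simp; omega⟩⟩
  refine le_ciInf fun I => ?_
  obtain ⟨j, hjI, hj⟩ := h I.1 I.2
  calc c ≤ dist (μs j) ν := hj
    _ = ⨆ _ : j ∈ I.1, dist (μs j) ν := (ciSup_pos (f := fun _ => dist (μs j) ν) hjI).symm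
    _ ≤ ⨆ i ∈ I.1, dist (μs i) ν :=
      le_ciSup (f := fun i => ⨆ _ : i ∈ I.1, dist (μs i) ν) (Set.finite_range _).bddAbove j

theorem dist_le_of_forall_grosObj_le {η w : M} {Mt : Set M} (hne : Mt.Nonempty) {t : ℝ}
    (hmin : ∀ ν ∈ Mt, grosObj K μs w ≤ grosObj K μs ν)
    (hfar : 2 * #{k | t < dist (μs k) η} < K) :
    dist w η ≤ 2 * t + Metric.infDist η Mt := by
  classical
  have hG : K < 2 * #{k | dist (μs k) η ≤ t} := by
    have := card_filter_add_card_filter_not (s := univ) fun k => dist (μs k) η ≤ t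
    simp only [not_le, card_univ, Fintype.card_fin] at this
    omega
  have hlower : dist w η - t ≤ grosObj K μs w := by
    refine le_grosObj_of_forall_exists_le (by omega) fun I hI => ?_
    obtain ⟨j, hj⟩ := inter_nonempty_of_lt_two_mul_card (α := Fin K)
      (by simpa using hG) (by simpa using hI)
    obtain ⟨hjG, hjI⟩ := mem_inter.mp hj
    refine ⟨j, hjI, ?_⟩
    linarith [dist_triangle_left w η (μs j), (mem_filter.mp hjG).2]
  refine le_of_forall_pos_le_add fun θ hθ => ?_
  obtain ⟨ν, hνMt, hνd⟩ : ∃ ν ∈ Mt, dist η ν < Metric.infDist η Mt + θ := by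
    rw [← Metric.infDist_lt_iff hne]; linarith
  have hupper : grosObj K μs ν ≤ t + dist η ν :=
    grosObj_le_of_forall_dist_le _ hG fun j hj =>
      (dist_triangle _ η _).trans (by gcongr; exact (mem_filter.mp hj).2)
  linarith [hmin ν hνMt]

end grosObj

namespace ProbabilityTheory

variable {Ω ι : Type*} {mΩ : MeasurableSpace Ω} {μ : Measure Ω}

theorem iIndepFun.iIndepSet_preimage {β : Type*} [MeasurableSpace β] {f : ι → Ω → β}
    (h : iIndepFun f μ)
    (hf : ∀ i, Measurable (f i)) {B : Set β} (hB : MeasurableSet B) :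
    iIndepSet (fun i => f i ⁻¹' B) μ :=
  (iIndepSet_iff_meas_biInter fun i => hf i hB).2 fun S =>
    iIndepFun_iff_measure_inter_preimage_eq_mul.1 h S fun _ _ => hB

theorem iIndepSet.measureReal_card_ge_le_exp [IsProbabilityMeasure μ] [Fintype ι]
    {A : ι → Set Ω} [∀ i, DecidablePred (· ∈ A i)] (hind : iIndepSet A μ)
    (hA : ∀ i, MeasurableSet (A i)) {p : ℝ} (hp : ∀ i, μ.real (A i) ≤ p) {s : ℝ} (hs : 0 ≤ s) :
    μ.real {ω | Fintype.card ι * (p + s) ≤ #{i | ω ∈ A i}} ≤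
      Real.exp (-2 * s ^ 2 * Fintype.card ι) := by
  set X : ι → Ω → ℝ := fun i => (A i).indicator 1
  have hX : ∀ i, Measurable (X i) := fun i => measurable_one.indicator (hA i)
  have hmean : ∀ i, μ[X i] = μ.real (A i) := fun i => integral_indicator_one (hA i)
  have hsubG : ∀ i ∈ (univ : Finset ι),
      HasSubgaussianMGF (fun ω => X i ω - μ.real (A i)) ((‖(1 : ℝ) - 0‖₊ / 2) ^ 2) μ := fun i _ =>
    hmean i ▸ hasSubgaussianMGF_of_mem_Icc (hX i).aemeasurable <| ae_of_all _ fun ω => by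
      by_cases h : ω ∈ A i <;> simp [X, h]
  have hindX : iIndepFun (fun i ω => X i ω - μ.real (A i)) μ :=
    hind.iIndepFun_indicator.comp (fun i x => x - μ.real (A i))
      fun _ => measurable_id.sub_const _
  have hsum : ∀ ω, ∑ i, (X i ω - μ.real (A i)) = #{i | ω ∈ A i} - ∑ i, μ.real (A i) :=
    fun ω => by simp [X, Set.indicator_apply]
  have hmeans : ∑ i, μ.real (A i) ≤ Fintype.card ι * p := by
    simpa using sum_le_sum fun i (_ : i ∈ univ) => hp i
  calc μ.real {ω | Fintype.card ι * (p + s) ≤ #{i | ω ∈ A i}}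
      ≤ μ.real {ω | Fintype.card ι * s ≤ ∑ i, (X i ω - μ.real (A i))} :=
        measureReal_mono fun ω hω => by
          simp only [Set.mem_ofPred_eq, hsum, mul_add] at hω ⊢; linarith
    _ ≤ Real.exp (-(Fintype.card ι * s) ^ 2 /
          (2 * ((∑ _i : ι, (‖(1 : ℝ) - 0‖₊ / 2) ^ 2 : NNReal) : ℝ))) :=
        HasSubgaussianMGF.measure_sum_ge_le_of_iIndepFun hindX hsubG (by positivity)
    _ = Real.exp (-2 * s ^ 2 * Fintype.card ι) := by
        have hc : ((∑ _i : ι, (‖(1 : ℝ) - 0‖₊ / 2) ^ 2 : NNReal) : ℝ) = Fintype.card ι / 4 := by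
          norm_num [div_eq_mul_inv]
        rw [hc]
        congr 1
        rcases eq_or_ne (Fintype.card ι : ℝ) 0 with h | h
        · simp [h]
        · field_simp
          ring

end ProbabilityTheory

theorem Real.exp_neg_le_of_log_inv_le {δ x : ℝ} (hδ : 0 < δ) (h : Real.log δ⁻¹ ≤ x) :
    Real.exp (-x) ≤ δ := by
  rw [Real.log_inv] at h
  calc Real.exp (-x) ≤ Real.exp (Real.log δ) := Real.exp_le_exp.2 (by linarith)
    _ = δ := Real.exp_log hδ

theorem stmt16_general {Ω M : Type*} [MeasureSpace Ω] [IsProbabilityMeasure (ℙ : Measure Ω)]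
    [MetricSpace M] [MeasurableSpace M] [BorelSpace M]
    (δ : ℝ) (hδ : δ ∈ Set.Ioo (0 : ℝ) 1)
    (K : ℕ) (hKδ : K = ⌈8 * Real.log (1 / δ)⌉₊)
    (η : M) (Mt : Set M) (hne : Mt.Nonempty)
    (ε : ℝ) (hε : Metric.infDist η Mt = ε)
    (μs : Fin K → Ω → M) (hmeas : ∀ k, Measurable (μs k))
    (hind : iIndepFun μs ℙ)
    (t : ℝ)
    (hfar : ∀ k, ℙ {ω | t < dist (μs k ω) η} ≤ ENNReal.ofReal (1 / 4))
    (μt : Ω → M)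
    (hmin : ∀ᵐ ω ∂ℙ, ∀ ν ∈ Mt,
      grosObj K (fun k => μs k ω) (μt ω) ≤ grosObj K (fun k => μs k ω) ν) :
    ℙ {ω | 2 * t + ε < dist (μt ω) η} ≤ ENNReal.ofReal δ := by
  have hB : MeasurableSet {x : M | t < dist x η} :=
    (isOpen_lt continuous_const (continuous_id.dist continuous_const)).measurableSet
  have hindA : iIndepSet (fun k => {ω | t < dist (μs k ω) η}) ℙ :=
    hind.iIndepSet_preimage hmeas hB
  have hfar' : ∀ k, Measure.real ℙ {ω | t < dist (μs k ω) η} ≤ 1 / 4 := fun k =>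
    ENNReal.toReal_le_of_le_ofReal (by norm_num) (hfar k)
  have hbad : {ω | 2 * t + ε < dist (μt ω) η} ≤ᵐ[ℙ]
      {ω | (K : ℝ) * (1 / 4 + 1 / 4) ≤ #{k | ω ∈ {ω | t < dist (μs k ω) η}}} := by
    filter_upwards [hmin] with ω hω hω'
    by_contra hcount
    change ¬ (K : ℝ) * (1 / 4 + 1 / 4) ≤ #{k | t < dist (μs k ω) η} at hcount
    have hfew : 2 * #{k | t < dist (μs k ω) η} < K := by
      exact_mod_cast (by linarith : (2 * #{k | t < dist (μs k ω) η} : ℝ) < K)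
    exact (dist_le_of_forall_grosObj_le hne hω hfew).not_gt (hε ▸ hω')
  have hexp : Real.exp (-2 * (1 / 4) ^ 2 * K) ≤ δ := by
    have hceil := Nat.le_ceil (8 * Real.log (1 / δ))
    rw [← hKδ, one_div] at hceil
    convert Real.exp_neg_le_of_log_inv_le hδ.1 (x := K / 8) (by linarith) using 2
    ring
  calc ℙ {ω | 2 * t + ε < dist (μt ω) η}
      ≤ ℙ {ω | (K : ℝ) * (1 / 4 + 1 / 4) ≤ #{k | ω ∈ {ω | t < dist (μs k ω) η}}} :=
        measure_mono_ae hbad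
    _ ≤ ENNReal.ofReal δ := by
        rw [← ofReal_measureReal]
        refine ENNReal.ofReal_le_ofReal (le_trans ?_ hexp)
        simpa using hindA.measureReal_card_ge_le_exp (fun k => hmeas k hB) hfar'
          (by norm_num : (0 : ℝ) ≤ 1 / 4)

/-- Mis-specified sub-Gaussian aggregation: if the GROS minimization is carried
out over a subset `M̃` at distance `ε` from `η`, with `K = ⌈8 log(1/δ)⌉`
independent estimators each satisfying `P(d(μ_k, η) > t) ≤ 1/4`, then
`P(d(μ̃, η) > 2t + ε) ≤ δ`. -/
theorem stmt16 {Ω M : Type*} [MeasureSpace Ω] [IsProbabilityMeasure (ℙ : Measure Ω)]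
    [MetricSpace M] [MeasurableSpace M] [BorelSpace M]
    (δ : ℝ) (hδ : δ ∈ Set.Ioo (0 : ℝ) 1) (hδ' : δ ≤ Real.exp (-1))
    (K : ℕ) (hKδ : K = ⌈8 * Real.log (1 / δ)⌉₊) (hKpos : 0 < K)
    (η : M) (Mt : Set M) (hne : Mt.Nonempty)
    (ε : ℝ) (hε : Metric.infDist η Mt = ε)
    (μs : Fin K → Ω → M) (hmeas : ∀ k, Measurable (μs k))
    (hind : iIndepFun μs ℙ)
    (t : ℝ) (ht : 0 < t)
    (hfar : ∀ k, ℙ {ω | t < dist (μs k ω) η} ≤ ENNReal.ofReal (1 / 4))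
    (μt : Ω → M) (hmem : ∀ ω, μt ω ∈ Mt)
    (hmin : ∀ᵐ ω ∂ℙ, ∀ ν ∈ Mt,
      grosObj K (fun k => μs k ω) (μt ω) ≤ grosObj K (fun k => μs k ω) ν) :
    ℙ {ω | 2 * t + ε < dist (μt ω) η} ≤ ENNReal.ofReal δ :=
  stmt16_general δ hδ K hKδ η Mt hne ε hε μs hmeas hind t hfar μt hmin
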